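/- Assume |A| ≥ 2. (1) For every finite maximal joinless code P ⊆ nA* there exists N ∈ ℕ such that |P| = 1 + (|A| − 1)·N; i.e. |A| − 1 divides |P| − 1. (2) Conversely, for every N ∈ ℕ there exists a finite maximal joinless code in nA* of cardinality 1 + (|A| − 1)·N. -/

import Mathlib

namespace BrinThompson

abbrev W (A : Type*) (n : ℕ) : Type _ := Fin n → List A

variable {A : Type*} {n : ℕ}

/-- Coordinatewise concatenation in `nA*`. -/
def cat (u x : W A n) : W A n := fun i => u i ++ x i

/-- `u ≤_init v` : `u` is an initial factor of `v`. -/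
def initLE (u v : W A n) : Prop := ∃ x : W A n, v = cat u x

/-- `w` is the join (least upper bound) of `u` and `v` w.r.t. `≤_init`. -/
def isJoin (u v w : W A n) : Prop :=
  initLE u w ∧ initLE v w ∧ ∀ z : W A n, initLE u z → initLE v z → initLE w z

/-- `u` and `v` have a join. -/
def HasJoin (u v : W A n) : Prop := ∃ w : W A n, isJoin u v w

/-- A joinless code: no two distinct elements have a join. -/
def JoinlessCode (S : Set (W A n)) : Prop :=
  ∀ u ∈ S, ∀ v ∈ S, u ≠ v → ¬ HasJoin u v

/-- A maximal joinless code: joinless, and every element of `nA*` has a join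
with some element of the code. -/
def MaxJoinlessCode (S : Set (W A n)) : Prop :=
  JoinlessCode S ∧ ∀ x : W A n, ∃ p ∈ S, HasJoin x p

/-- The right ideal `C · nA*` generated by `C`. -/
def genIdeal (C : Set (W A n)) : Set (W A n) := {w | ∃ c ∈ C, ∃ x : W A n, w = cat c x}

def IsRightIdeal (R : Set (W A n)) : Prop := genIdeal R = R

/-- An initial factor code: pairwise `≤_init`-incomparable set. -/
def InitFactorCode (S : Set (W A n)) : Prop :=
  ∀ u ∈ S, ∀ v ∈ S, initLE u v → u = v

/-- `A_{ε,n}`: tuples with one coordinate a single letter and the rest empty. -/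
def Aeps (A : Type*) (n : ℕ) : Set (W A n) :=
  {w | ∃ i : Fin n, ∃ a : A, w i = [a] ∧ ∀ j : Fin n, j ≠ i → w j = []}

/-- `(ε)^n`, the tuple of empty strings. -/
def epsn (A : Type*) (n : ℕ) : W A n := fun _ => []

/-- `nA^ω`: `n`-tuples of one-sided infinite sequences over `A`. -/
abbrev Winf (A : Type*) (n : ℕ) : Type _ := Fin n → ℕ → A

/-- Concatenation of a finite tuple `p ∈ nA*` with an infinite tuple `u ∈ nA^ω`. -/
def catInf (p : W A n) (u : Winf A n) : Winf A n :=
  fun i k => if h : k < (p i).length then (p i).get ⟨k, h⟩ else u i (k - (p i).length)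

/-- `v` is an interior vertex of the `P`-dag: a strict initial factor of
some element of `P`. -/
def Interior (P : Set (W A n)) (v : W A n) : Prop := ∃ p ∈ P, initLE v p ∧ v ≠ p

/-- The child of `v` in direction `i`, extended by letter `a`. -/
def child (v : W A n) (i : Fin n) (a : A) : W A n := Function.update v i (v i ++ [a])

/-- A leaf of the interior dag of `P`: an interior vertex none of whose
children is interior. -/
def InteriorLeaf (P : Set (W A n)) (v : W A n) : Prop :=
  Interior P v ∧ ∀ (i : Fin n) (a : A), ¬ Interior P (child v i a)

/-- `v_+ = (v · A_{ε,n}) ∩ P`, the set of children of `v` belonging to `P`. -/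
def vplus (P : Set (W A n)) (v : W A n) : Set (W A n) :=
  {w | (∃ (i : Fin n) (a : A), w = child v i a) ∧ w ∈ P}

/-- The depth of a vertex: the sum of the coordinate lengths. -/
def depth (v : W A n) : ℕ := ∑ i, (v i).length

/-- One-step restriction of `P` at `(p, i)`. -/
def oneStep (P : Set (W A n)) (p : W A n) (i : Fin n) : Set (W A n) :=
  (P \ {p}) ∪ {w | ∃ a : A, w = child p i a}

/-- One step in a sequence of one-step restrictions. -/
def RestrStep (P Q : Set (W A n)) : Prop := ∃ p ∈ P, ∃ i : Fin n, Q = oneStep P p i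

/-- The box code `A^{k_1} × … × A^{k_n}`. -/
def box (A : Type*) {n : ℕ} (k : Fin n → ℕ) : Set (W A n) :=
  {w | ∀ i : Fin n, (w i).length = k i}

/-- Elementwise join `P ∨ Q` of two sets, ranging over the joins that exist. -/
def setJoin (P Q : Set (W A n)) : Set (W A n) :=
  {w | ∃ p ∈ P, ∃ q ∈ Q, isJoin p q w}

/-- `ℓ(S)`: the maximum coordinate length occurring in `S`. -/
noncomputable def ell (S : Set (W A n)) : ℕ :=
  sSup {m | ∃ z ∈ S, ∃ i : Fin n, (z i).length = m}

/-- An element of `n RI^fin_A`: an injective right ideal morphism of `nA*`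
whose domain code and image code are finite maximal joinless codes.
`toFun` is a total function whose values outside `Dom` are irrelevant. -/
structure RIMfin (A : Type*) (n : ℕ) where
  Dom : Set (W A n)
  toFun : W A n → W A n
  domC : Set (W A n)
  imC : Set (W A n)
  ideal : IsRightIdeal Dom
  morph : ∀ x ∈ Dom, ∀ w : W A n, toFun (cat x w) = cat (toFun x) w
  inj : Set.InjOn toFun Dom
  domC_gen : genIdeal domC = Dom
  imC_gen : genIdeal imC = toFun '' Dom
  domC_fin : domC.Finite
  domC_max : MaxJoinlessCode domC
  imC_fin : imC.Finite
  imC_max : MaxJoinlessCode imC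

/-- `ℓ(f) = max{ℓ(z) : z ∈ domC(f) ∪ imC(f)}`. -/
noncomputable def ellF (F : RIMfin A n) : ℕ := ell (F.domC ∪ F.imC)

/-- `G` extends `F` (as partial functions). -/
def Extends (F G : RIMfin A n) : Prop :=
  F.Dom ⊆ G.Dom ∧ ∀ x ∈ F.Dom, G.toFun x = F.toFun x

/-- `F` and `G` are equal as partial functions. -/
def EquivRIM (F G : RIMfin A n) : Prop :=
  F.Dom = G.Dom ∧ ∀ x ∈ F.Dom, F.toFun x = G.toFun x

/-- `G` is a maximal extension of `F` in `n RI^fin_A`. -/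
def MaxExtension (F G : RIMfin A n) : Prop :=
  Extends F G ∧ ∀ H : RIMfin A n, Extends G H → EquivRIM G H

/-!
Two tuples have a join iff they are coordinatewise prefix-comparable. Hence, if `L` bounds
all coordinate lengths in a finite maximal joinless code `P`, every tuple of words of length
`L` has exactly one initial factor in `P`, and counting these tuples gives the Kraft equality
`∑_{p ∈ P} |A|^(nL - depth p) = |A|^(nL)`; reducing modulo `|A| - 1` gives `|P| ≡ 1`.
Conversely, replacing one element `p` of a maximal joinless code by its `|A|` one-letter
extensions in a fixed coordinate keeps it a maximal joinless code and adds `|A| - 1` elements.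
-/

lemma initLE_iff {u v : W A n} : initLE u v ↔ ∀ i, u i <+: v i := by
  constructor
  · rintro ⟨x, rfl⟩ i
    exact ⟨x i, rfl⟩
  · intro h
    refine ⟨fun i => (v i).drop (u i).length, funext fun i => ?_⟩
    obtain ⟨t, ht⟩ := h i
    simp [cat, ← ht]

lemma initLE_refl (u : W A n) : initLE u u := initLE_iff.mpr fun _ => List.prefix_refl _

lemma epsn_initLE (u : W A n) : initLE (epsn A n) u := initLE_iff.mpr fun _ => List.nil_prefix

lemma initLE_child (v : W A n) (i : Fin n) (a : A) : initLE v (child v i a) := by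
  refine initLE_iff.mpr fun j => ?_
  rcases eq_or_ne j i with rfl | hji
  · simp [child]
  · simp [child, Function.update_of_ne hji]

lemma prefix_of_prefix_or_prefix_of_length_le {l m : List A} (h : l <+: m ∨ m <+: l)
    (hl : l.length ≤ m.length) : l <+: m := by
  rcases h with h | h
  · exact h
  · rw [h.eq_of_length (le_antisymm h.length_le hl)]

lemma hasJoin_iff {u v : W A n} : HasJoin u v ↔ ∀ i, u i <+: v i ∨ v i <+: u i := by
  constructor
  · rintro ⟨w, hu, hv, -⟩ i
    exact List.prefix_or_prefix_of_prefix (initLE_iff.mp hu i) (initLE_iff.mp hv i)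
  · intro h
    have hu : ∀ i, u i <+: (if (u i).length ≤ (v i).length then v i else u i) := fun i => by
      split_ifs with hl
      exacts [prefix_of_prefix_or_prefix_of_length_le (h i) hl, List.prefix_refl _]
    have hv : ∀ i, v i <+: (if (u i).length ≤ (v i).length then v i else u i) := fun i => by
      split_ifs with hl
      exacts [List.prefix_refl _, prefix_of_prefix_or_prefix_of_length_le (h i).symm (by omega)]
    refine ⟨_, initLE_iff.mpr hu, initLE_iff.mpr hv,
      fun z huz hvz => initLE_iff.mpr fun i => ?_⟩
    split_ifs
    exacts [initLE_iff.mp hvz i, initLE_iff.mp huz i]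

lemma HasJoin.symm {u v : W A n} (h : HasJoin u v) : HasJoin v u :=
  hasJoin_iff.mpr fun i => (hasJoin_iff.mp h i).symm

lemma hasJoin_of_initLE_of_initLE {u v w : W A n} (hu : initLE u w) (hv : initLE v w) :
    HasJoin u v :=
  hasJoin_iff.mpr fun i =>
    List.prefix_or_prefix_of_prefix (initLE_iff.mp hu i) (initLE_iff.mp hv i)

lemma HasJoin.of_initLE {u v : W A n} (h : initLE u v) : HasJoin u v :=
  hasJoin_of_initLE_of_initLE h (initLE_refl v)

lemma HasJoin.mono_right {u v w : W A n} (h : HasJoin u v) (hw : initLE w v) : HasJoin u w := by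
  refine hasJoin_iff.mpr fun i => ?_
  rcases hasJoin_iff.mp h i with h | h
  · exact List.prefix_or_prefix_of_prefix h (initLE_iff.mp hw i)
  · exact Or.inr ((initLE_iff.mp hw i).trans h)

lemma HasJoin.initLE_of_length_le {u v : W A n} (h : HasJoin u v)
    (hl : ∀ i, (u i).length ≤ (v i).length) : initLE u v :=
  initLE_iff.mpr fun i => prefix_of_prefix_or_prefix_of_length_le (hasJoin_iff.mp h i) (hl i)

lemma JoinlessCode.eq_of_hasJoin {P : Set (W A n)} (hP : JoinlessCode P) {u v : W A n}
    (hu : u ∈ P) (hv : v ∈ P) (h : HasJoin u v) : u = v := by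
  by_contra hne
  exact hP u hu v hv hne h

lemma MaxJoinlessCode.nonempty {P : Set (W A n)} (hP : MaxJoinlessCode P) : P.Nonempty :=
  let ⟨p, hp, _⟩ := hP.2 (epsn A n)
  ⟨p, hp⟩

lemma maxJoinlessCode_singleton_epsn : MaxJoinlessCode {epsn A n} :=
  ⟨fun _ hu _ hv hne => absurd (hu.trans hv.symm) hne,
    fun x => ⟨epsn A n, rfl, (HasJoin.of_initLE (epsn_initLE x)).symm⟩⟩

instance [DecidableEq A] (u v : W A n) : Decidable (initLE u v) :=
  decidable_of_iff _ initLE_iff.symm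

section Kraft

variable {L : ℕ}

def ofVectors (w : Fin n → List.Vector A L) : W A n := fun i => (w i).toList

variable [Fintype A]

lemma card_vector_prefix [DecidableEq A] (c : List A) (hc : c.length ≤ L) :
    Fintype.card {l : List.Vector A L // c <+: l.toList} = Fintype.card A ^ (L - c.length) := by
  rw [← card_vector]
  refine Fintype.card_congr
    { toFun := fun l => ⟨l.1.toList.drop c.length, by simp⟩
      invFun := fun t => ⟨⟨c ++ t.toList, by simp; omega⟩, List.prefix_append _ _⟩
      left_inv := ?_
      right_inv := ?_ }
  · rintro ⟨⟨l, hl⟩, ⟨t, ht⟩⟩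
    apply Subtype.ext; apply Subtype.ext
    simp only [List.Vector.toList_mk] at ht ⊢
    simp [← ht]
  · rintro ⟨t, ht⟩
    apply Subtype.ext
    simp

lemma card_initLE_ofVectors [DecidableEq A] (p : W A n) (hp : ∀ i, (p i).length ≤ L) :
    (Finset.univ.filter fun w : Fin n → List.Vector A L => initLE p (ofVectors w)).card
      = Fintype.card A ^ ∑ i, (L - (p i).length) := by
  simp only [initLE_iff, ofVectors]
  rw [← Fintype.card_subtype,
    Fintype.card_congr (Equiv.subtypePiEquivPi (p := fun i l => p i <+: List.Vector.toList l)),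
    Fintype.card_pi, Finset.prod_congr rfl fun i _ => card_vector_prefix (p i) (hp i),
    Finset.prod_pow_eq_pow_sum]

theorem MaxJoinlessCode.sum_pow_eq {P : Finset (W A n)} (hP : MaxJoinlessCode (P : Set (W A n)))
    (hL : ∀ p ∈ P, ∀ i, (p i).length ≤ L) :
    ∑ p ∈ P, Fintype.card A ^ ∑ i, (L - (p i).length) = Fintype.card A ^ (L * n) := by
  classical
  set extensions : W A n → Finset (Fin n → List.Vector A L) :=
    fun p => Finset.univ.filter fun w => initLE p (ofVectors w)
  have hdisj : (P : Set (W A n)).PairwiseDisjoint extensions := by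
    refine fun p hp p' hp' hne => Finset.disjoint_left.mpr fun w hw hw' => hne ?_
    simp only [extensions, Finset.mem_filter, Finset.mem_univ, true_and] at hw hw'
    exact hP.1.eq_of_hasJoin hp hp' (hasJoin_of_initLE_of_initLE hw hw')
  have hcover : P.biUnion extensions = Finset.univ := by
    refine Finset.eq_univ_of_forall fun w => ?_
    obtain ⟨p, hp, hj⟩ := hP.2 (ofVectors w)
    refine Finset.mem_biUnion.mpr ⟨p, hp, ?_⟩
    have hlen : ∀ i, (p i).length ≤ (ofVectors w i).length := fun i => by
      simpa [ofVectors] using hL p hp i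
    simpa [extensions] using hj.symm.initLE_of_length_le hlen
  calc ∑ p ∈ P, Fintype.card A ^ ∑ i, (L - (p i).length)
      = ∑ p ∈ P, (extensions p).card :=
        Finset.sum_congr rfl fun p hp => (card_initLE_ofVectors p (hL p hp)).symm
    _ = Fintype.card (Fin n → List.Vector A L) := by
        rw [← Finset.card_biUnion hdisj, hcover, Finset.card_univ]
    _ = Fintype.card A ^ (L * n) := by simp [card_vector, pow_mul]

theorem MaxJoinlessCode.ncard_modEq_one [Nonempty A] {P : Set (W A n)}
    (hfin : P.Finite) (hP : MaxJoinlessCode P) : P.ncard ≡ 1 [MOD Fintype.card A - 1] := by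
  classical
  lift P to Finset (W A n) using hfin
  set L := P.sup fun p => Finset.univ.sup fun i => (p i).length
  have hL : ∀ p ∈ P, ∀ i, (p i).length ≤ L := fun p hp i =>
    (Finset.le_sup (f := fun i => (p i).length) (Finset.mem_univ i)).trans
      (Finset.le_sup (f := fun p => Finset.univ.sup fun i => (p i).length) hp)
  have hq : (Fintype.card A : ZMod (Fintype.card A - 1)) = 1 :=
    mod_cast (ZMod.natCast_eq_natCast_iff _ _ _).mpr (Nat.modEq_sub Fintype.card_pos)
  have hkraft := congrArg (Nat.cast : ℕ → ZMod (Fintype.card A - 1)) (hP.sum_pow_eq hL)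
  push_cast [hq] at hkraft
  rw [Set.ncard_coe_finset, ← ZMod.natCast_eq_natCast_iff]
  simpa using hkraft

end Kraft

section OneStep

variable {P : Set (W A n)} {p : W A n} {i : Fin n}

lemma oneStep_eq_union_range : oneStep P p i = (P \ {p}) ∪ Set.range (child p i) := by
  ext w
  simp [oneStep, eq_comm]

lemma child_injective (p : W A n) (i : Fin n) : Function.Injective (child p i) := by
  intro a b h
  simpa [child] using congrFun h i

lemma eq_of_hasJoin_child {a b : A} (h : HasJoin (child p i a) (child p i b)) : a = b := by
  rcases hasJoin_iff.mp h i with hi | hi <;> simp only [child, Function.update_self] at hi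
  · simpa using hi.eq_of_length (by simp)
  · simpa using (hi.eq_of_length (by simp)).symm

lemma hasJoin_child_of_hasJoin {x : W A n} {a : A} (h : HasJoin x p)
    (hi : x i <+: p i ++ [a] ∨ p i ++ [a] <+: x i) : HasJoin x (child p i a) := by
  refine hasJoin_iff.mpr fun j => ?_
  rcases eq_or_ne j i with rfl | hji
  · simpa [child] using hi
  · simpa [child, Function.update_of_ne hji] using hasJoin_iff.mp h j

lemma exists_prefix_or_prefix_append_singleton [Nonempty A] {l m : List A}
    (h : l <+: m ∨ m <+: l) : ∃ a : A, l <+: m ++ [a] ∨ m ++ [a] <+: l := by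
  rcases h with h | ⟨_ | ⟨a, t⟩, rfl⟩
  · exact ⟨Classical.arbitrary A, Or.inl (h.trans (List.prefix_append _ _))⟩
  · exact ⟨Classical.arbitrary A, Or.inl (by simp)⟩
  · exact ⟨a, Or.inr ⟨t, by simp⟩⟩

lemma joinlessCode_oneStep (hP : JoinlessCode P) (hp : p ∈ P) : JoinlessCode (oneStep P p i) := by
  have hchild : ∀ u ∈ P \ {p}, ∀ a, ¬ HasJoin u (child p i a) := fun u hu a hj =>
    hu.2 (hP.eq_of_hasJoin hu.1 hp (hj.mono_right (initLE_child p i a)))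
  rw [oneStep_eq_union_range]
  rintro u (hu | ⟨a, rfl⟩) v (hv | ⟨b, rfl⟩) hne hj
  · exact hP u hu.1 v hv.1 hne hj
  · exact hchild u hu b hj
  · exact hchild v hv a hj.symm
  · exact hne (congrArg _ (eq_of_hasJoin_child hj))

lemma maxJoinlessCode_oneStep [Nonempty A] (hP : MaxJoinlessCode P) (hp : p ∈ P) :
    MaxJoinlessCode (oneStep P p i) := by
  refine ⟨joinlessCode_oneStep hP.1 hp, fun x => ?_⟩
  obtain ⟨p', hp', hj⟩ := hP.2 x
  rw [oneStep_eq_union_range]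
  by_cases hpp : p' = p
  · subst hpp
    obtain ⟨a, ha⟩ := exists_prefix_or_prefix_append_singleton (hasJoin_iff.mp hj i)
    exact ⟨child p' i a, Or.inr ⟨a, rfl⟩, hasJoin_child_of_hasJoin hj ha⟩
  · exact ⟨p', Or.inl ⟨hp', hpp⟩, hj⟩

lemma ncard_oneStep_add_one [Fintype A] (hP : JoinlessCode P) (hfin : P.Finite)
    (hp : p ∈ P) : (oneStep P p i).ncard + 1 = P.ncard + Fintype.card A := by
  have hdisj : Disjoint (P \ {p}) (Set.range (child p i)) := by
    rw [Set.disjoint_left]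
    rintro w ⟨hw, hwp⟩ ⟨a, rfl⟩
    exact hwp (hP.eq_of_hasJoin hw hp (HasJoin.of_initLE (initLE_child p i a)).symm)
  rw [oneStep_eq_union_range, Set.ncard_union_eq hdisj hfin.sdiff (Set.finite_range _),
    Set.ncard_range_of_injective (child_injective p i), Nat.card_eq_fintype_card,
    add_right_comm, Set.ncard_sdiff_singleton_add_one hp hfin]

end OneStep

theorem exists_maxJoinlessCode_ncard [Fintype A] [Nonempty A] (i : Fin n) (N : ℕ) :
    ∃ P : Set (W A n), P.Finite ∧ MaxJoinlessCode P ∧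
      P.ncard = 1 + (Fintype.card A - 1) * N := by
  induction N with
  | zero => exact ⟨{epsn A n}, Set.finite_singleton _, maxJoinlessCode_singleton_epsn, by simp⟩
  | succ N ih =>
    obtain ⟨P, hfin, hP, hcard⟩ := ih
    obtain ⟨p, hp⟩ := hP.nonempty
    refine ⟨oneStep P p i, ?_, maxJoinlessCode_oneStep hP hp, ?_⟩
    · rw [oneStep_eq_union_range]
      exact hfin.sdiff.union (Set.finite_range _)
    · have hstep := ncard_oneStep_add_one (i := i) hP.1 hfin hp
      have hq := Fintype.card_pos (α := A)
      rw [Nat.mul_succ]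
      omega

/-- Cardinality of finite maximal joinless codes: always of the form
`1 + (|A|-1)·N`, and every such cardinality is realized. -/
theorem maxJoinless_card {A : Type*} [Fintype A] (hA : 2 ≤ Fintype.card A)
    {n : ℕ} (hn : 1 ≤ n) :
    (∀ P : Set (W A n), P.Finite → MaxJoinlessCode P →
      ∃ N : ℕ, P.ncard = 1 + (Fintype.card A - 1) * N) ∧
    (∀ N : ℕ, ∃ P : Set (W A n), P.Finite ∧ MaxJoinlessCode P ∧
      P.ncard = 1 + (Fintype.card A - 1) * N) := by
  have : Nonempty A := Fintype.card_pos_iff.mp (by omega)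
  refine ⟨fun P hfin hP => ?_, exists_maxJoinlessCode_ncard ⟨0, hn⟩⟩
  have hpos : 1 ≤ P.ncard := (Set.ncard_pos hfin).mpr hP.nonempty
  obtain ⟨N, hN⟩ := (Nat.modEq_iff_dvd' hpos).mp (hP.ncard_modEq_one hfin).symm
  exact ⟨N, by omega⟩

end BrinThompson
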